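/- arXiv:0709.0283 — 5 statements merged into one kernel-verified Lean document; each statement's English description precedes it below -/
import Mathlib

section
/- Let S₁, S₂, S₃ be three distinct partial splits of X with parts Aᵢ ∈ Sᵢ (and Ãᵢ the other part of Sᵢ) satisfying the Y-rule condition: A₁∩A₂∩A₃ ≠ ∅, Ã₁∩Ã₂∩A₃ ≠ ∅, Ã₁∩A₂∩Ã₃ ≠ ∅ and A₁∩Ã₂∩Ã₃ = ∅. If in addition Ã₁∩Ã₂∩Ã₃ ≠ ∅ and A₁ ⊆ A₂ ∪ A₃, then the M-rule applies to {S₂, S₃} with respect to the parts A₂, A₃ and produces the partial split (A₂∪A₃)|(Ã₂∩Ã₃); moreover the M-rule applies to this partial split together with S₁, and one of the partial splits it produces is A₁|(Ã₁∪(Ã₂∩Ã₃)), i.e. exactly the partial split S₁' generated by the Y-rule applied to {S₁,S₂,S₃} with respect to A₁, A₂, A₃. -/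
/-!
Common definitions: partial splits of a finite set `X`, modelled as unordered
pairs (`Sym2`) of nonempty disjoint subsets of `X`; the `M`-, `Y`- and `Z`-
closure rules; weak compatibility; `X`-cycles and display; split closure
sequences and split closures.
-/

variable {X : Type*}

/-- `S` is a partial split of `X`: an unordered pair of nonempty disjoint subsets of `X`. -/
def IsPartialSplit (S : Sym2 (Set X)) : Prop :=
  ∃ A B : Set X, S = s(A, B) ∧ A.Nonempty ∧ B.Nonempty ∧ Disjoint A B

/-- `S` is a full split of `X`: a partial split whose two parts cover `X`. -/
def IsFullSplit (S : Sym2 (Set X)) : Prop :=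
  ∃ A B : Set X, S = s(A, B) ∧ A.Nonempty ∧ B.Nonempty ∧ Disjoint A B ∧ A ∪ B = Set.univ

/-- The partial split `S` extends the partial split `T`. -/
def SplitExtends (S T : Sym2 (Set X)) : Prop :=
  ∃ A B C D : Set X, S = s(A, B) ∧ T = s(C, D) ∧ C ⊆ A ∧ D ⊆ B

/-- `Sig ⪯ Sig'`: every partial split of `Sig` is extended by one of `Sig'`. -/
def Preceq (Sig Sig' : Set (Sym2 (Set X))) : Prop :=
  ∀ S ∈ Sig, ∃ T ∈ Sig', SplitExtends T S

/-- `Sig⁻`: the set obtained from `Sig` by removing all redundant partial splits,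
i.e. those extended by a different element of `Sig`. -/
def sreduce (Sig : Set (Sym2 (Set X))) : Set (Sym2 (Set X)) :=
  {S | S ∈ Sig ∧ ¬ ∃ T ∈ Sig, T ≠ S ∧ SplitExtends T S}

/-- `Sig ∈ P(X)`: `Sig` is an irreducible collection of partial splits of `X`. -/
def InPX (Sig : Set (Sym2 (Set X))) : Prop :=
  (∀ S ∈ Sig, IsPartialSplit S) ∧ sreduce Sig = Sig

/-- Two partial splits are compatible if some part of one is disjoint from some part
of the other. -/
def SplitCompatible (S T : Sym2 (Set X)) : Prop :=
  ∃ A B C D : Set X, S = s(A, B) ∧ T = s(C, D) ∧ A ∩ C = ∅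

/-- Weak compatibility of a (multi)triple of partial splits: for every choice of parts,
one of the four distinguished triple intersections is empty. -/
def WeaklyCompatTriple (S1 S2 S3 : Sym2 (Set X)) : Prop :=
  ∀ A1 B1 A2 B2 A3 B3 : Set X,
    S1 = s(A1, B1) → S2 = s(A2, B2) → S3 = s(A3, B3) →
    A1 ∩ A2 ∩ A3 = ∅ ∨ B1 ∩ B2 ∩ A3 = ∅ ∨ B1 ∩ A2 ∩ B3 = ∅ ∨ A1 ∩ B2 ∩ B3 = ∅

/-- A collection of partial splits is weakly compatible if every three of its members are. -/
def WeaklyCompatible (Sig : Set (Sym2 (Set X))) : Prop :=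
  ∀ S1 ∈ Sig, ∀ S2 ∈ Sig, ∀ S3 ∈ Sig, WeaklyCompatTriple S1 S2 S3

/-- Condition of the `M`-rule for the parts `A1|B1`, `A2|B2`. -/
def mCond (A1 B1 A2 B2 : Set X) : Prop :=
  (A1 ∩ A2).Nonempty ∧ (B1 ∩ B2).Nonempty

/-- Output of the `M`-rule applied with respect to the parts `A1|B1`, `A2|B2`. -/
def mOut (A1 B1 A2 B2 : Set X) : Set (Sym2 (Set X)) :=
  {s(A1, B1), s(A2, B2), s(A1 ∩ A2, B1 ∪ B2), s(B1 ∩ B2, A1 ∪ A2)}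

/-- Condition of the `Y`-rule for the parts `A1|B1`, `A2|B2`, `A3|B3`. -/
def yCond (A1 B1 A2 B2 A3 B3 : Set X) : Prop :=
  (A1 ∩ A2 ∩ A3).Nonempty ∧ (B1 ∩ B2 ∩ A3).Nonempty ∧
    (B1 ∩ A2 ∩ B3).Nonempty ∧ A1 ∩ B2 ∩ B3 = ∅

/-- Output of the `Y`-rule applied with respect to the parts `A1|B1`, `A2|B2`, `A3|B3`. -/
def yOut (A1 B1 A2 B2 A3 B3 : Set X) : Set (Sym2 (Set X)) :=
  {s(B1 ∪ (B2 ∩ B3), A1), s(A2 ∪ (A1 ∩ B3), B2), s(A3 ∪ (A1 ∩ B2), B3)}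

/-- Condition of the `Z`-rule for the parts `A1|B1`, `A2|B2`. -/
def zCond (A1 B1 A2 B2 : Set X) : Prop :=
  (A1 ∩ A2).Nonempty ∧ (A2 ∩ B1).Nonempty ∧ (B1 ∩ B2).Nonempty ∧ A1 ∩ B2 = ∅

/-- Output of the `Z`-rule applied with respect to the parts `A1|B1`, `A2|B2`. -/
def zOut (A1 B1 A2 B2 : Set X) : Set (Sym2 (Set X)) :=
  {s(B1 ∪ B2, A1), s(B2, A1 ∪ A2)}

/-- `Sig'` is obtained from `Sig` by a single application of the `Y`-rule. -/
def yStep (Sig Sig' : Set (Sym2 (Set X))) : Prop :=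
  ∃ A1 B1 A2 B2 A3 B3 : Set X,
    s(A1, B1) ∈ Sig ∧ s(A2, B2) ∈ Sig ∧ s(A3, B3) ∈ Sig ∧
    s(A1, B1) ≠ s(A2, B2) ∧ s(A1, B1) ≠ s(A3, B3) ∧ s(A2, B2) ≠ s(A3, B3) ∧
    yCond A1 B1 A2 B2 A3 B3 ∧
    Sig' = sreduce (Sig ∪ yOut A1 B1 A2 B2 A3 B3)

/-- `Sig'` is obtained from `Sig` by a single application of the `M`-rule. -/
def mStep (Sig Sig' : Set (Sym2 (Set X))) : Prop :=
  ∃ A1 B1 A2 B2 : Set X,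
    s(A1, B1) ∈ Sig ∧ s(A2, B2) ∈ Sig ∧ s(A1, B1) ≠ s(A2, B2) ∧
    mCond A1 B1 A2 B2 ∧
    Sig' = sreduce (Sig ∪ mOut A1 B1 A2 B2)

/-- `Sig'` is obtained from `Sig` by a single non-trivial application of the `Y`-rule. -/
def yStepNT (Sig Sig' : Set (Sym2 (Set X))) : Prop :=
  ∃ A1 B1 A2 B2 A3 B3 : Set X,
    s(A1, B1) ∈ Sig ∧ s(A2, B2) ∈ Sig ∧ s(A3, B3) ∈ Sig ∧
    s(A1, B1) ≠ s(A2, B2) ∧ s(A1, B1) ≠ s(A3, B3) ∧ s(A2, B2) ≠ s(A3, B3) ∧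
    yCond A1 B1 A2 B2 A3 B3 ∧
    ¬ Preceq (sreduce (yOut A1 B1 A2 B2 A3 B3)) Sig ∧
    Sig' = sreduce (Sig ∪ yOut A1 B1 A2 B2 A3 B3)

/-- `Sig'` is obtained from `Sig` by a single non-trivial application of the `M`-rule. -/
def mStepNT (Sig Sig' : Set (Sym2 (Set X))) : Prop :=
  ∃ A1 B1 A2 B2 : Set X,
    s(A1, B1) ∈ Sig ∧ s(A2, B2) ∈ Sig ∧ s(A1, B1) ≠ s(A2, B2) ∧
    mCond A1 B1 A2 B2 ∧
    ¬ Preceq (sreduce (mOut A1 B1 A2 B2)) Sig ∧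
    Sig' = sreduce (Sig ∪ mOut A1 B1 A2 B2)

/-- `Sig` is closed under the `Y`-rule: every application of the `Y`-rule to `Sig` is trivial. -/
def yClosed (Sig : Set (Sym2 (Set X))) : Prop :=
  ∀ A1 B1 A2 B2 A3 B3 : Set X,
    s(A1, B1) ∈ Sig → s(A2, B2) ∈ Sig → s(A3, B3) ∈ Sig →
    s(A1, B1) ≠ s(A2, B2) → s(A1, B1) ≠ s(A3, B3) → s(A2, B2) ≠ s(A3, B3) →
    yCond A1 B1 A2 B2 A3 B3 →
    Preceq (sreduce (yOut A1 B1 A2 B2 A3 B3)) Sig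

/-- `Sig` is closed under the `M`-rule: every application of the `M`-rule to `Sig` is trivial. -/
def mClosed (Sig : Set (Sym2 (Set X))) : Prop :=
  ∀ A1 B1 A2 B2 : Set X,
    s(A1, B1) ∈ Sig → s(A2, B2) ∈ Sig → s(A1, B1) ≠ s(A2, B2) →
    mCond A1 B1 A2 B2 →
    Preceq (sreduce (mOut A1 B1 A2 B2)) Sig

/-- A split closure sequence for `Sig` of length `n` with respect to the property `P` and
the non-trivial single-application relation `stepNT`: a strictly `⪯`-increasing sequence
in `P(X)` starting at `Sig` in which every term satisfying `P` is followed by the result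
of one non-trivial application of the rule. -/
def IsClosureSeq (P : Set (Sym2 (Set X)) → Prop)
    (stepNT : Set (Sym2 (Set X)) → Set (Sym2 (Set X)) → Prop)
    (Sig : Set (Sym2 (Set X))) (n : ℕ) (f : ℕ → Set (Sym2 (Set X))) : Prop :=
  f 0 = Sig ∧ (∀ i ≤ n, InPX (f i)) ∧
    (∀ i < n, P (f i) ∧ stepNT (f i) (f (i + 1)) ∧
      Preceq (f i) (f (i + 1)) ∧ f i ≠ f (i + 1))

/-- `cl` is a split closure of `Sig` (with `cl = none` playing the role of `ω`):
the last element of a split closure sequence for `Sig`, which either satisfies `P` and is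
closed under the rule, or fails `P`, in which case it is replaced by `ω`. -/
def IsSplitClosure (P : Set (Sym2 (Set X)) → Prop)
    (stepNT : Set (Sym2 (Set X)) → Set (Sym2 (Set X)) → Prop)
    (closed : Set (Sym2 (Set X)) → Prop)
    (Sig : Set (Sym2 (Set X))) (cl : Option (Set (Sym2 (Set X)))) : Prop :=
  ∃ (n : ℕ) (f : ℕ → Set (Sym2 (Set X))),
    IsClosureSeq P stepNT Sig n f ∧
    ((P (f n) ∧ closed (f n) ∧ cl = some (f n)) ∨ (¬ P (f n) ∧ cl = none))

/-- Split closure with respect to the `Y`-rule, `(P)` being weak compatibility. -/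
def IsYClosure (Sig : Set (Sym2 (Set X))) (cl : Option (Set (Sym2 (Set X)))) : Prop :=
  IsSplitClosure WeaklyCompatible yStepNT yClosed Sig cl

/-- Split closure with respect to the `M`-rule, `(P)` holding for all collections. -/
def IsMClosure (Sig : Set (Sym2 (Set X))) (cl : Option (Set (Sym2 (Set X)))) : Prop :=
  IsSplitClosure (fun _ => True) mStepNT mClosed Sig cl

/-- Split closure with respect to the combined `M/Y`-rule, `(P)` being weak compatibility. -/
def IsMYClosure (Sig : Set (Sym2 (Set X))) (cl : Option (Set (Sym2 (Set X)))) : Prop :=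
  IsSplitClosure WeaklyCompatible
    (fun s s' => mStepNT s s' ∨ yStepNT s s') (fun s => mClosed s ∧ yClosed s) Sig cl

/-- `C` is an `X`-cycle: a connected graph on the vertex set `X` (`|X| ≥ 3`) in which
every vertex has degree `2`. -/
def IsXCycle (C : SimpleGraph X) : Prop :=
  C.Connected ∧ 3 ≤ Nat.card X ∧ ∀ v : X, (C.neighborSet v).ncard = 2

/-- The partial split `S` is displayed by the `X`-cycle `C`: there are two distinct
edges of `C` whose deletion leaves one component containing one part of `S` and
another component containing the other part. -/
def DisplaysSplit (C : SimpleGraph X) (S : Sym2 (Set X)) : Prop :=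
  ∃ A B : Set X, S = s(A, B) ∧
    ∃ e1 e2 : Sym2 X, e1 ∈ C.edgeSet ∧ e2 ∈ C.edgeSet ∧ e1 ≠ e2 ∧
      ∃ c1 c2 : (C.deleteEdges {e1, e2}).ConnectedComponent,
        c1 ≠ c2 ∧ A ⊆ c1.supp ∧ B ⊆ c2.supp

/-- A collection of partial splits is displayed by `C` if each of its members is. -/
def DisplaysColl (C : SimpleGraph X) (Sig : Set (Sym2 (Set X))) : Prop :=
  ∀ S ∈ Sig, DisplaysSplit C S

/-- `cl ≠ ω` and the underlying collection is displayed by `C`. -/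
def OptionDisplays (C : SimpleGraph X) (cl : Option (Set (Sym2 (Set X)))) : Prop :=
  ∃ Sig, cl = some Sig ∧ DisplaysColl C Sig

/-- The ground set `A ∪ B` of a partial split `A|B`. -/
def splitGround (S : Sym2 (Set X)) : Set X :=
  ⋃₀ {A : Set X | A ∈ S}

/-- Membership in `P_ω(X) = P(X) ∪ {ω}`. -/
def InPOmega (x : Option (Set (Sym2 (Set X)))) : Prop :=
  x = none ∨ ∃ Sig, x = some Sig ∧ InPX Sig

/-- The order `⪯` on `P_ω(X)`, with `Sig ⪯ ω` for all `Sig` and `ω ⪯ ω`. -/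
def PreceqO (x y : Option (Set (Sym2 (Set X)))) : Prop :=
  y = none ∨ ∃ Sig Sig', x = some Sig ∧ y = some Sig' ∧ Preceq Sig Sig'

/-- Split closure as a relation on `P_ω(X)`, with `⟨ω⟩ = ω`. -/
def ClosO (cls : Set (Sym2 (Set X)) → Option (Set (Sym2 (Set X))) → Prop)
    (x y : Option (Set (Sym2 (Set X)))) : Prop :=
  (x = none ∧ y = none) ∨ ∃ Sig, x = some Sig ∧ cls Sig y

/-- if three distinct partial splits satisfy the `Y`-rule condition and,
in addition, `Ã₁∩Ã₂∩Ã₃ ≠ ∅` and `A₁ ⊆ A₂ ∪ A₃`, then the `M`-rule applies to `{S₂,S₃}`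
with respect to `A₂, A₃` producing `(A₂∪A₃)|(Ã₂∩Ã₃)`, the `M`-rule applies to this partial
split together with `S₁`, and one of its products is `A₁|(Ã₁∪(Ã₂∩Ã₃))`, which is exactly
the partial split `S₁'` generated by the `Y`-rule. -/
theorem statement0 {X : Type*} [Fintype X] (A1 B1 A2 B2 A3 B3 : Set X)
    (hA1 : A1.Nonempty) (hB1 : B1.Nonempty) (hd1 : Disjoint A1 B1)
    (hA2 : A2.Nonempty) (hB2 : B2.Nonempty) (hd2 : Disjoint A2 B2)
    (hA3 : A3.Nonempty) (hB3 : B3.Nonempty) (hd3 : Disjoint A3 B3)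
    (hne12 : s(A1, B1) ≠ s(A2, B2)) (hne13 : s(A1, B1) ≠ s(A3, B3))
    (hne23 : s(A2, B2) ≠ s(A3, B3))
    (hy : yCond A1 B1 A2 B2 A3 B3)
    (hBBB : (B1 ∩ B2 ∩ B3).Nonempty)
    (hsub : A1 ⊆ A2 ∪ A3) :
    mCond A2 B2 A3 B3 ∧
    s(B2 ∩ B3, A2 ∪ A3) ∈ mOut A2 B2 A3 B3 ∧
    mCond (A2 ∪ A3) (B2 ∩ B3) A1 B1 ∧
    s(A1, B1 ∪ (B2 ∩ B3)) ∈ mOut (A2 ∪ A3) (B2 ∩ B3) A1 B1 ∧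
    s(A1, B1 ∪ (B2 ∩ B3)) ∈ yOut A1 B1 A2 B2 A3 B3 := by
  obtain ⟨⟨x, hx⟩, _, _, _⟩ := hy
  obtain ⟨y, hy1, hy2⟩ := hBBB
  refine ⟨⟨⟨x, hx.1.2, hx.2⟩, ⟨y, hy1.2, hy2⟩⟩, ?_, ⟨⟨x, Or.inl hx.1.2, hx.1.1⟩, ⟨y, ⟨hy1.2, hy2⟩, hy1.1⟩⟩, ?_, ?_⟩
  · simp [mOut]
  · have h1 : (A2 ∪ A3) ∩ A1 = A1 := Set.inter_eq_self_of_subset_right hsub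
    have h2 : B2 ∩ B3 ∪ B1 = B1 ∪ (B2 ∩ B3) := Set.union_comm _ _
    simp only [mOut, Set.mem_insert_iff, Set.mem_singleton_iff]
    right; right; left
    rw [h1, h2]
  · simp only [yOut, Set.mem_insert_iff, Set.mem_singleton_iff]
    left; exact Sym2.eq_swap
end

section
/- Suppose S₁ is a full split of X and S₂ is a partial split of X such that the Z-rule θ_Z applies to Σ = {S₁, S₂} with respect to some choice of parts A₁ ∈ S₁, A₂ ∈ S₂. Then θ_M(Σ)⁻ = θ_Z(Σ), where θ_M is applied to Σ with respect to the same parts A₁, A₂. -/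
/-!
Common definitions: partial splits of a finite set `X`, modelled as unordered
pairs (`Sym2`) of nonempty disjoint subsets of `X`; the `M`-, `Y`- and `Z`-
closure rules; weak compatibility; `X`-cycles and display; split closure
sequences and split closures.
-/

variable {X : Type*}

lemma splitExtends_iff' {X : Type*} (a b c d : Set X) :
    SplitExtends s(a, b) s(c, d) ↔ (c ⊆ a ∧ d ⊆ b) ∨ (c ⊆ b ∧ d ⊆ a) := by
  constructor
  · rintro ⟨A, B, C, D, h1, h2, h3, h4⟩
    rw [Sym2.eq_iff] at h1 h2
    rcases h1 with ⟨rfl, rfl⟩ | ⟨rfl, rfl⟩ <;> rcases h2 with ⟨rfl, rfl⟩ | ⟨rfl, rfl⟩ <;> tauto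
  · rintro (⟨h1, h2⟩ | ⟨h1, h2⟩)
    · exact ⟨a, b, c, d, rfl, rfl, h1, h2⟩
    · exact ⟨b, a, c, d, Sym2.eq_swap.symm, rfl, h1, h2⟩

/-- if `S₁ = A₁|B₁` is a full split of `X`, `S₂ = A₂|B₂` a partial split, and
the `Z`-rule applies to `{S₁,S₂}` with respect to `A₁, A₂`, then `θ_M({S₁,S₂})⁻ = θ_Z({S₁,S₂})`
(with `θ_M` applied with respect to the same parts). -/
theorem statement1 {X : Type*} [Fintype X] (A1 B1 A2 B2 : Set X)
    (hA1 : A1.Nonempty) (hB1 : B1.Nonempty) (hd1 : Disjoint A1 B1)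
    (hfull : A1 ∪ B1 = Set.univ)
    (hA2 : A2.Nonempty) (hB2 : B2.Nonempty) (hd2 : Disjoint A2 B2)
    (hne : s(A1, B1) ≠ s(A2, B2))
    (hz : zCond A1 B1 A2 B2) :
    sreduce (mOut A1 B1 A2 B2) = zOut A1 B1 A2 B2 := by
  obtain ⟨h12, h2b1, hb12, hA1B2⟩ := hz
  have hB2B1 : B2 ⊆ B1 := by
    intro x hx
    have hxu : x ∈ A1 ∪ B1 := hfull ▸ Set.mem_univ x
    rcases hxu with h | h
    · exact absurd (hA1B2 ▸ (⟨h, hx⟩ : x ∈ A1 ∩ B2)) (Set.notMem_empty x)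
    · exact h
  have hBun : B1 ∪ B2 = B1 := Set.union_eq_self_of_subset_right hB2B1
  have hBint : B1 ∩ B2 = B2 := Set.inter_eq_self_of_subset_right hB2B1
  have hnA1B2 : ¬ A1 ⊆ B2 := by
    intro h; obtain ⟨x, hx⟩ := hA1
    exact absurd (hA1B2 ▸ (⟨hx, h hx⟩ : x ∈ A1 ∩ B2)) (Set.notMem_empty x)
  have hnB2A1 : ¬ B2 ⊆ A1 := by
    intro h; obtain ⟨x, hx⟩ := hB2
    exact absurd (hA1B2 ▸ (⟨h hx, hx⟩ : x ∈ A1 ∩ B2)) (Set.notMem_empty x)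
  have hnA2A1 : ¬ A2 ⊆ A1 := by
    intro h; obtain ⟨y, hy2, hy1⟩ := h2b1
    exact Set.disjoint_left.mp hd1 (h hy2) hy1
  have hnB1B2 : ¬ B1 ⊆ B2 := by
    intro h; obtain ⟨y, hy2, hy1⟩ := h2b1
    exact Set.disjoint_left.mp hd2 hy2 (h hy1)
  have hnA2B2 : ¬ A2 ⊆ B2 := by
    intro h; obtain ⟨x, hx⟩ := hA2
    exact Set.disjoint_left.mp hd2 hx (h hx)
  have hnB2A2 : ¬ B2 ⊆ A2 := by
    intro h; obtain ⟨x, hx⟩ := hB2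
    exact Set.disjoint_right.mp hd2 hx (h hx)
  have hnA1B1 : ¬ A1 ⊆ B1 := by
    intro h; obtain ⟨x, hx⟩ := hA1
    exact Set.disjoint_left.mp hd1 hx (h hx)
  have hm : mOut A1 B1 A2 B2
      = {s(A1, B1), s(A2, B2), s(A1 ∩ A2, B1), s(B2, A1 ∪ A2)} := by
    rw [mOut, hBun, hBint]
  have hzz : zOut A1 B1 A2 B2 = {s(A1, B1), s(B2, A1 ∪ A2)} := by
    rw [zOut, hBun]
    have : s(B1, A1) = s(A1, B1) := Sym2.eq_swap
    rw [this]
  rw [hm, hzz]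
  ext S
  simp only [sreduce, Set.mem_setOf_eq, Set.mem_insert_iff, Set.mem_singleton_iff]
  constructor
  · rintro ⟨hmem, hnr⟩
    rcases hmem with rfl | rfl | rfl | rfl
    · exact Or.inl rfl
    · by_cases hc : A1 ⊆ A2
      · right
        rw [Set.union_eq_right.mpr hc]
        exact Sym2.eq_swap.symm
      · exfalso; apply hnr
        refine ⟨s(B2, A1 ∪ A2), Or.inr (Or.inr (Or.inr rfl)), ?_, ?_⟩
        · intro h
          rw [Sym2.eq_iff] at h
          rcases h with ⟨h1, h2⟩ | ⟨h1, h2⟩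
          · exact hnB2A2 h1.subset
          · exact hc (Set.union_eq_right.mp h2)
        · exact (splitExtends_iff' _ _ _ _).mpr
            (Or.inr ⟨Set.subset_union_right, subset_rfl⟩)
    · by_cases hc : A1 ⊆ A2
      · left
        rw [Set.inter_eq_left.mpr hc]
      · exfalso; apply hnr
        refine ⟨s(A1, B1), Or.inl rfl, ?_, ?_⟩
        · intro h
          rw [Sym2.eq_iff] at h
          rcases h with ⟨h1, h2⟩ | ⟨h1, h2⟩
          · exact hc (h1.subset.trans Set.inter_subset_right)
          · exact hnA1B1 h1.subset
        · exact (splitExtends_iff' _ _ _ _).mpr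
            (Or.inl ⟨Set.inter_subset_left, subset_rfl⟩)
    · exact Or.inr rfl
  · rintro (rfl | rfl)
    · refine ⟨Or.inl rfl, ?_⟩
      rintro ⟨T, hT, hTne, hText⟩
      rcases hT with rfl | rfl | rfl | rfl <;>
        rw [splitExtends_iff'] at hText
      · exact hTne rfl
      · rcases hText with ⟨h1, h2⟩ | ⟨h1, h2⟩
        · exact hnB1B2 h2
        · exact hnA1B2 h1
      · rcases hText with ⟨h1, h2⟩ | ⟨h1, h2⟩
        · exact hTne (by rw [Set.inter_eq_left.mpr (h1.trans Set.inter_subset_right)])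
        · exact hnA1B1 h1
      · rcases hText with ⟨h1, h2⟩ | ⟨h1, h2⟩
        · exact hnA1B2 h1
        · exact hnB1B2 h2
    · refine ⟨Or.inr (Or.inr (Or.inr rfl)), ?_⟩
      rintro ⟨T, hT, hTne, hText⟩
      rcases hT with rfl | rfl | rfl | rfl <;>
        rw [splitExtends_iff'] at hText
      · rcases hText with ⟨h1, h2⟩ | ⟨h1, h2⟩
        · exact hnB2A1 h1
        · exact hnA2A1 (Set.subset_union_right.trans h2)
      · rcases hText with ⟨h1, h2⟩ | ⟨h1, h2⟩
        · exact hnB2A2 h1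
        · exact hTne (by rw [Set.union_eq_right.mpr (Set.subset_union_left.trans h2)]; exact Sym2.eq_swap)
      · rcases hText with ⟨h1, h2⟩ | ⟨h1, h2⟩
        · exact hnB2A1 (h1.trans Set.inter_subset_left)
        · exact hnA2A1 (Set.subset_union_right.trans (h2.trans Set.inter_subset_left))
      · exact hTne rfl
end

section
/- Suppose S₁ is a full split of X and S₂, S₃ are partial splits of X, with a common choice of parts A₁ ∈ S₁, A₂ ∈ S₂, A₃ ∈ S₃ such that the Y-rule θ_Y applies to Σ = {S₁, S₂, S₃} with respect to A₁, A₂, A₃, and the Z-rule θ_Z applies to {S₁, S₂} and to {S₁, S₃} with respect to the corresponding parts. Then (θ_Y(Σ) ∪ θ_M(S₁,S₂) ∪ θ_M(S₁,S₃))⁻ = (θ_Z(S₁,S₂) ∪ θ_Z(S₁,S₃))⁻, where θ_M is applied with respect to the same parts. -/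
/-!
Common definitions: partial splits of a finite set `X`, modelled as unordered
pairs (`Sym2`) of nonempty disjoint subsets of `X`; the `M`-, `Y`- and `Z`-
closure rules; weak compatibility; `X`-cycles and display; split closure
sequences and split closures.
-/

variable {X : Type*}

lemma splitExtends_iff'_s2 (P Q C D : Set X) :
    SplitExtends s(P, Q) s(C, D) ↔ (C ⊆ P ∧ D ⊆ Q) ∨ (C ⊆ Q ∧ D ⊆ P) := by
  constructor
  · rintro ⟨A, B, C', D', h1, h2, h3, h4⟩
    rw [Sym2.eq_iff] at h1 h2
    rcases h1 with ⟨rfl, rfl⟩ | ⟨rfl, rfl⟩ <;>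
      rcases h2 with ⟨rfl, rfl⟩ | ⟨rfl, rfl⟩ <;> tauto
  · rintro (⟨h1, h2⟩ | ⟨h1, h2⟩)
    · exact ⟨P, Q, C, D, rfl, rfl, h1, h2⟩
    · exact ⟨Q, P, C, D, Sym2.eq_swap, rfl, h1, h2⟩

lemma union_three {α : Type*} (t1 t2 t3 t4 t5 t6 t7 : α) :
    ({t1, t2, t3} : Set α) ∪ {t1, t2, t4, t5} ∪ {t1, t3, t6, t7} =
      {t1, t2, t3, t4, t5, t6, t7} := by
  ext x
  simp only [Set.mem_union, Set.mem_insert_iff, Set.mem_singleton_iff]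
  tauto

lemma union_two {α : Type*} (t1 t5 t7 : α) :
    ({t1, t5} : Set α) ∪ {t1, t7} = {t1, t5, t7} := by
  ext x
  simp only [Set.mem_union, Set.mem_insert_iff, Set.mem_singleton_iff]
  tauto

lemma sreduce_eq_of {R L : Set (Sym2 (Set X))} (hRL : R ⊆ L)
    (h1 : ∀ S ∈ L, S ∉ R → ∃ T ∈ R, SplitExtends T S)
    (h2 : ∀ S ∈ R, ∀ T ∈ L, SplitExtends T S → T = S) :
    sreduce L = sreduce R := by
  have hL : sreduce L = R := by
    apply Set.eq_of_subset_of_subset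
    · rintro S ⟨hSL, hS⟩
      by_contra hSR
      obtain ⟨T, hTR, hTS⟩ := h1 S hSL hSR
      exact hS ⟨T, hRL hTR, fun h => hSR (h ▸ hTR), hTS⟩
    · intro S hSR
      refine ⟨hRL hSR, ?_⟩
      rintro ⟨T, hTL, hTne, hTS⟩
      exact hTne (h2 S hSR T hTL hTS)
  have hR : sreduce R = R := by
    apply Set.eq_of_subset_of_subset
    · rintro S ⟨hS, _⟩; exact hS
    · intro S hSR
      refine ⟨hSR, ?_⟩
      rintro ⟨T, hTR, hTne, hTS⟩
      exact hTne (h2 S hSR T (hRL hTR) hTS)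
  rw [hL, hR]

/-- if `S₁ = A₁|B₁` is a full split, `S₂, S₃` partial splits, the `Y`-rule applies
to `{S₁,S₂,S₃}` with respect to `A₁,A₂,A₃`, and the `Z`-rule applies to `{S₁,S₂}` and `{S₁,S₃}`
with respect to the corresponding parts, then
`(θ_Y(Σ) ∪ θ_M(S₁,S₂) ∪ θ_M(S₁,S₃))⁻ = (θ_Z(S₁,S₂) ∪ θ_Z(S₁,S₃))⁻`. -/
theorem statement2 {X : Type*} [Fintype X] (A1 B1 A2 B2 A3 B3 : Set X)
    (hA1 : A1.Nonempty) (hB1 : B1.Nonempty) (hd1 : Disjoint A1 B1)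
    (hfull : A1 ∪ B1 = Set.univ)
    (hA2 : A2.Nonempty) (hB2 : B2.Nonempty) (hd2 : Disjoint A2 B2)
    (hA3 : A3.Nonempty) (hB3 : B3.Nonempty) (hd3 : Disjoint A3 B3)
    (hne12 : s(A1, B1) ≠ s(A2, B2)) (hne13 : s(A1, B1) ≠ s(A3, B3))
    (hne23 : s(A2, B2) ≠ s(A3, B3))
    (hy : yCond A1 B1 A2 B2 A3 B3)
    (hz12 : zCond A1 B1 A2 B2) (hz13 : zCond A1 B1 A3 B3) :
    sreduce (yOut A1 B1 A2 B2 A3 B3 ∪ mOut A1 B1 A2 B2 ∪ mOut A1 B1 A3 B3) =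
      sreduce (zOut A1 B1 A2 B2 ∪ zOut A1 B1 A3 B3) := by
  obtain ⟨hy1, hy2, hy3, hy4⟩ := hy
  obtain ⟨hz12a, hz12b, hz12c, hz12d⟩ := hz12
  obtain ⟨hz13a, hz13b, hz13c, hz13d⟩ := hz13
  -- basic consequences
  have hB2B1 : B2 ⊆ B1 := by
    intro x hx
    have hx1 : x ∈ A1 ∪ B1 := by rw [hfull]; trivial
    rcases hx1 with h | h
    · exact absurd (Set.mem_inter h hx) (by rw [hz12d]; exact Set.notMem_empty x)
    · exact h
  have hB3B1 : B3 ⊆ B1 := by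
    intro x hx
    have hx1 : x ∈ A1 ∪ B1 := by rw [hfull]; trivial
    rcases hx1 with h | h
    · exact absurd (Set.mem_inter h hx) (by rw [hz13d]; exact Set.notMem_empty x)
    · exact h
  have notA1B2 : ¬ A1 ⊆ B2 := by
    intro h
    obtain ⟨x, hx⟩ := hA1
    exact absurd (Set.mem_inter hx (h hx)) (by rw [hz12d]; exact Set.notMem_empty x)
  have notA1B3 : ¬ A1 ⊆ B3 := by
    intro h
    obtain ⟨x, hx⟩ := hA1
    exact absurd (Set.mem_inter hx (h hx)) (by rw [hz13d]; exact Set.notMem_empty x)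
  have notA1B1 : ¬ A1 ⊆ B1 := by
    intro h
    obtain ⟨x, hx⟩ := hA1
    exact Set.disjoint_left.mp hd1 hx (h hx)
  have notB1B2 : ¬ B1 ⊆ B2 := by
    intro h
    obtain ⟨x, hx1, hx2⟩ := hz12b
    exact Set.disjoint_left.mp hd2 hx1 (h hx2)
  have notB1B3 : ¬ B1 ⊆ B3 := by
    intro h
    obtain ⟨x, hx1, hx2⟩ := hz13b
    exact Set.disjoint_left.mp hd3 hx1 (h hx2)
  have notA2A1 : ¬ A2 ⊆ A1 := by
    intro h
    obtain ⟨x, hx1, hx2⟩ := hz12b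
    exact Set.disjoint_left.mp hd1 (h hx1) hx2
  have notA3A1 : ¬ A3 ⊆ A1 := by
    intro h
    obtain ⟨x, hx1, hx2⟩ := hz13b
    exact Set.disjoint_left.mp hd1 (h hx1) hx2
  have notB2A1 : ¬ B2 ⊆ A1 := by
    intro h
    obtain ⟨x, hx⟩ := hB2
    exact absurd (Set.mem_inter (h hx) hx) (by rw [hz12d]; exact Set.notMem_empty x)
  have notB3A1 : ¬ B3 ⊆ A1 := by
    intro h
    obtain ⟨x, hx⟩ := hB3
    exact absurd (Set.mem_inter (h hx) hx) (by rw [hz13d]; exact Set.notMem_empty x)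
  have notB2A2 : ¬ B2 ⊆ A2 := by
    intro h
    obtain ⟨x, hx⟩ := hB2
    exact Set.disjoint_left.mp hd2 (h hx) hx
  have notB3A3 : ¬ B3 ⊆ A3 := by
    intro h
    obtain ⟨x, hx⟩ := hB3
    exact Set.disjoint_left.mp hd3 (h hx) hx
  have notB2B3 : ¬ B2 ⊆ B3 := by
    intro h
    obtain ⟨x, hx⟩ := hy2
    exact Set.disjoint_left.mp hd3 hx.2 (h hx.1.2)
  have notB3B2 : ¬ B3 ⊆ B2 := by
    intro h
    obtain ⟨x, hx⟩ := hy3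
    exact Set.disjoint_left.mp hd2 hx.1.2 (h hx.2)
  -- set simplifications
  have e1 : B1 ∪ B2 ∩ B3 = B1 :=
    Set.union_eq_self_of_subset_right (Set.inter_subset_left.trans hB2B1)
  have e2 : A2 ∪ A1 ∩ B3 = A2 := by rw [hz13d, Set.union_empty]
  have e3 : A3 ∪ A1 ∩ B2 = A3 := by rw [hz12d, Set.union_empty]
  have e4 : B1 ∪ B2 = B1 := Set.union_eq_self_of_subset_right hB2B1
  have e5 : B1 ∩ B2 = B2 := Set.inter_eq_self_of_subset_right hB2B1
  have e6 : B1 ∪ B3 = B1 := Set.union_eq_self_of_subset_right hB3B1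
  have e7 : B1 ∩ B3 = B3 := Set.inter_eq_self_of_subset_right hB3B1
  have eswap : s(B1, A1) = s(A1, B1) := Sym2.eq_swap
  have hL : yOut A1 B1 A2 B2 A3 B3 ∪ mOut A1 B1 A2 B2 ∪ mOut A1 B1 A3 B3 =
      ({s(A1, B1), s(A2, B2), s(A3, B3), s(A1 ∩ A2, B1), s(B2, A1 ∪ A2),
        s(A1 ∩ A3, B1), s(B3, A1 ∪ A3)} : Set (Sym2 (Set X))) := by
    simp only [yOut, mOut, e1, e2, e3, e4, e5, e6, e7, eswap]
    exact union_three _ _ _ _ _ _ _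
  have hR : zOut A1 B1 A2 B2 ∪ zOut A1 B1 A3 B3 =
      ({s(A1, B1), s(B2, A1 ∪ A2), s(B3, A1 ∪ A3)} : Set (Sym2 (Set X))) := by
    simp only [zOut, e4, e6, eswap]
    exact union_two _ _ _
  rw [hL, hR]
  apply sreduce_eq_of
  · intro S hS
    simp only [Set.mem_insert_iff, Set.mem_singleton_iff] at hS ⊢
    rcases hS with h | h | h
    · exact Or.inl h
    · exact Or.inr (Or.inr (Or.inr (Or.inr (Or.inl h))))
    · exact Or.inr (Or.inr (Or.inr (Or.inr (Or.inr (Or.inr h)))))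
  · intro S hSL hSR
    simp only [Set.mem_insert_iff, Set.mem_singleton_iff] at hSL hSR
    rcases hSL with rfl | rfl | rfl | rfl | rfl | rfl | rfl
    · exact absurd (Or.inl rfl) hSR
    · exact ⟨s(B2, A1 ∪ A2), Or.inr (Or.inl rfl),
        (splitExtends_iff'_s2 _ _ _ _).mpr (Or.inr ⟨Set.subset_union_right, subset_rfl⟩)⟩
    · exact ⟨s(B3, A1 ∪ A3), Or.inr (Or.inr rfl),
        (splitExtends_iff'_s2 _ _ _ _).mpr (Or.inr ⟨Set.subset_union_right, subset_rfl⟩)⟩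
    · exact ⟨s(A1, B1), Or.inl rfl,
        (splitExtends_iff'_s2 _ _ _ _).mpr (Or.inl ⟨Set.inter_subset_left, subset_rfl⟩)⟩
    · exact absurd (Or.inr (Or.inl rfl)) hSR
    · exact ⟨s(A1, B1), Or.inl rfl,
        (splitExtends_iff'_s2 _ _ _ _).mpr (Or.inl ⟨Set.inter_subset_left, subset_rfl⟩)⟩
    · exact absurd (Or.inr (Or.inr rfl)) hSR
  · intro S hSR T hTL hext
    simp only [Set.mem_insert_iff, Set.mem_singleton_iff] at hSR hTL
    rcases hSR with rfl | rfl | rfl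
    · -- S = s(A1, B1)
      rcases hTL with rfl | rfl | rfl | rfl | rfl | rfl | rfl
      · rfl
      · rcases (splitExtends_iff'_s2 _ _ _ _).mp hext with ⟨h1, h2⟩ | ⟨h1, h2⟩
        · exact absurd h2 notB1B2
        · exact absurd h1 notA1B2
      · rcases (splitExtends_iff'_s2 _ _ _ _).mp hext with ⟨h1, h2⟩ | ⟨h1, h2⟩
        · exact absurd h2 notB1B3
        · exact absurd h1 notA1B3
      · rcases (splitExtends_iff'_s2 _ _ _ _).mp hext with ⟨h1, h2⟩ | ⟨h1, h2⟩
        · rw [Set.eq_of_subset_of_subset Set.inter_subset_left h1]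
        · exact absurd h1 notA1B1
      · rcases (splitExtends_iff'_s2 _ _ _ _).mp hext with ⟨h1, h2⟩ | ⟨h1, h2⟩
        · exact absurd h1 notA1B2
        · exact absurd h2 notB1B2
      · rcases (splitExtends_iff'_s2 _ _ _ _).mp hext with ⟨h1, h2⟩ | ⟨h1, h2⟩
        · rw [Set.eq_of_subset_of_subset Set.inter_subset_left h1]
        · exact absurd h1 notA1B1
      · rcases (splitExtends_iff'_s2 _ _ _ _).mp hext with ⟨h1, h2⟩ | ⟨h1, h2⟩
        · exact absurd h1 notA1B3
        · exact absurd h2 notB1B3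
    · -- S = s(B2, A1 ∪ A2)
      rcases hTL with rfl | rfl | rfl | rfl | rfl | rfl | rfl
      · rcases (splitExtends_iff'_s2 _ _ _ _).mp hext with ⟨h1, h2⟩ | ⟨h1, h2⟩
        · exact absurd h1 notB2A1
        · exact absurd ((Set.union_subset_iff.mp h2).2) notA2A1
      · rcases (splitExtends_iff'_s2 _ _ _ _).mp hext with ⟨h1, h2⟩ | ⟨h1, h2⟩
        · exact absurd h1 notB2A2
        · rw [Set.union_eq_self_of_subset_left ((Set.union_subset_iff.mp h2).1)]
          exact Sym2.eq_swap
      · rcases (splitExtends_iff'_s2 _ _ _ _).mp hext with ⟨h1, h2⟩ | ⟨h1, h2⟩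
        · exact absurd ((Set.union_subset_iff.mp h2).1) notA1B3
        · exact absurd h1 notB2B3
      · rcases (splitExtends_iff'_s2 _ _ _ _).mp hext with ⟨h1, h2⟩ | ⟨h1, h2⟩
        · exact absurd (h1.trans Set.inter_subset_left) notB2A1
        · exact absurd ((Set.union_subset_iff.mp h2).2.trans Set.inter_subset_left)
            notA2A1
      · rfl
      · rcases (splitExtends_iff'_s2 _ _ _ _).mp hext with ⟨h1, h2⟩ | ⟨h1, h2⟩
        · exact absurd (h1.trans Set.inter_subset_left) notB2A1
        · exact absurd ((Set.union_subset_iff.mp h2).2.trans Set.inter_subset_left)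
            notA2A1
      · rcases (splitExtends_iff'_s2 _ _ _ _).mp hext with ⟨h1, h2⟩ | ⟨h1, h2⟩
        · exact absurd h1 notB2B3
        · exact absurd ((Set.union_subset_iff.mp h2).1) notA1B3
    · -- S = s(B3, A1 ∪ A3)
      rcases hTL with rfl | rfl | rfl | rfl | rfl | rfl | rfl
      · rcases (splitExtends_iff'_s2 _ _ _ _).mp hext with ⟨h1, h2⟩ | ⟨h1, h2⟩
        · exact absurd h1 notB3A1
        · exact absurd ((Set.union_subset_iff.mp h2).2) notA3A1
      · rcases (splitExtends_iff'_s2 _ _ _ _).mp hext with ⟨h1, h2⟩ | ⟨h1, h2⟩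
        · exact absurd ((Set.union_subset_iff.mp h2).1) notA1B2
        · exact absurd h1 notB3B2
      · rcases (splitExtends_iff'_s2 _ _ _ _).mp hext with ⟨h1, h2⟩ | ⟨h1, h2⟩
        · exact absurd h1 notB3A3
        · rw [Set.union_eq_self_of_subset_left ((Set.union_subset_iff.mp h2).1)]
          exact Sym2.eq_swap
      · rcases (splitExtends_iff'_s2 _ _ _ _).mp hext with ⟨h1, h2⟩ | ⟨h1, h2⟩
        · exact absurd (h1.trans Set.inter_subset_left) notB3A1
        · exact absurd ((Set.union_subset_iff.mp h2).2.trans Set.inter_subset_left)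
            notA3A1
      · rcases (splitExtends_iff'_s2 _ _ _ _).mp hext with ⟨h1, h2⟩ | ⟨h1, h2⟩
        · exact absurd h1 notB3B2
        · exact absurd ((Set.union_subset_iff.mp h2).1) notA1B2
      · rcases (splitExtends_iff'_s2 _ _ _ _).mp hext with ⟨h1, h2⟩ | ⟨h1, h2⟩
        · exact absurd (h1.trans Set.inter_subset_left) notB3A1
        · exact absurd ((Set.union_subset_iff.mp h2).2.trans Set.inter_subset_left)
            notA3A1
      · rfl
end

section
/- Suppose Σ is a collection of partial splits of X. If Σ is circular, then Σ is weakly compatible. -/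
/-!
Common definitions: partial splits of a finite set `X`, modelled as unordered
pairs (`Sym2`) of nonempty disjoint subsets of `X`; the `M`-, `Y`- and `Z`-
closure rules; weak compatibility; `X`-cycles and display; split closure
sequences and split closures.
-/

variable {X : Type*}

/-!
Deleting the two edges that display `Aᵢ|Bᵢ` leaves connected sides `Uᵢ ⊇ Aᵢ` and `Wᵢ ⊇ Bᵢ`,
and only those two edges leave `Uᵢ`. Suppose points `x, y, z, w` witness that the four triple
intersections are nonempty. A trail `p` from `x` to `w` inside `U₁` and a trail `q` from `y`
to `z` inside `W₁` both cross `U₂` and `U₃`, so each of these sets is left by exactly one edge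
of `p` and one edge of `q`. Trails inside `U₂` and inside `W₂` between points separated by `U₃`
show that one edge leaving `U₃` lies inside `U₂` and the other inside `W₂`, and symmetrically.
Counting the crossings of `U₂ ∩ U₃` modulo two along `p` (odd) and along `q` (even) then
gives contradictory answers.
-/

open SimpleGraph

section Crossing

variable {V : Type*}

def Sym2.Crosses (e : Sym2 V) (U : Set V) : Prop :=
  (∃ a ∈ e, a ∈ U) ∧ ∃ b ∈ e, b ∉ U

@[simp] lemma Sym2.crosses_mk_iff {U : Set V} {a b : V} :
    s(a, b).Crosses U ↔ ¬(a ∈ U ↔ b ∈ U) := by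
  simp only [Sym2.Crosses, Sym2.mem_iff, exists_eq_or_imp, exists_eq_left]
  tauto

lemma Sym2.Crosses.of_inter {U U' : Set V} {e : Sym2 V} (h : e.Crosses (U ∩ U')) :
    e.Crosses U ∨ e.Crosses U' := by
  induction e using Sym2.ind with
  | _ a b => simp only [Sym2.crosses_mk_iff, Set.mem_inter_iff] at h ⊢; tauto

lemma Disjoint.sym2 {U W : Set V} (h : Disjoint U W) : Disjoint U.sym2 W.sym2 := by
  refine Set.disjoint_left.mpr fun e heU heW => ?_
  induction e using Sym2.ind with
  | _ a b => exact h.notMem_of_mem_left heU.1 heW.1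

lemma Sym2.not_crosses_of_mem_sym2_or {U W : Set V} {e : Sym2 V} (hUW : Disjoint U W)
    (he : e ∈ U.sym2 ∨ e ∈ W.sym2) : ¬e.Crosses U := by
  induction e using Sym2.ind with
  | _ a b =>
    simp only [Sym2.crosses_mk_iff, Set.mk_mem_sym2_iff] at he ⊢
    have := hUW.notMem_of_mem_right (a := a)
    have := hUW.notMem_of_mem_right (a := b)
    tauto

lemma Sym2.Crosses.crosses_inter_iff {U U' W' : Set V} {e : Sym2 V} (h : e.Crosses U)
    (hUW : Disjoint U' W') (he : e ∈ U'.sym2 ∨ e ∈ W'.sym2) :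
    e.Crosses (U ∩ U') ↔ e ∈ U'.sym2 := by
  induction e using Sym2.ind with
  | _ a b =>
    simp only [Sym2.crosses_mk_iff, Set.mk_mem_sym2_iff, Set.mem_inter_iff] at h he ⊢
    have := hUW.notMem_of_mem_right (a := a)
    have := hUW.notMem_of_mem_right (a := b)
    tauto

end Crossing

section Parity

open scoped Classical

variable {α V : Type*}

lemma List.Nodup.even_countP_iff_of_pair {l : List α} (hl : l.Nodup) {P : α → Prop}
    {a b : α} (hab : a ≠ b) (ha : a ∈ l) (hb : b ∈ l) (hP : ∀ e ∈ l, P e → e = a ∨ e = b) :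
    Even (l.countP (P ·)) ↔ (P a ↔ P b) := by
  have hperm : (l.filter (P ·)).Perm ([a, b].filter (P ·)) := by
    have hab' : [a, b].Nodup := by simp [hab]
    rw [List.perm_ext_iff_of_nodup (hl.filter _) (hab'.filter _)]
    intro e
    simp only [List.mem_filter, decide_eq_true_eq, List.mem_cons, List.not_mem_nil, or_false]
    constructor
    · exact fun ⟨he, hPe⟩ => ⟨hP e he hPe, hPe⟩
    · rintro ⟨rfl | rfl, hPe⟩ <;> tauto
  rw [List.countP_eq_length_filter, hperm.length_eq]
  by_cases hPa : P a <;> by_cases hPb : P b <;> simp [hPa, hPb]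

lemma SimpleGraph.Walk.even_countP_crosses_iff {G : SimpleGraph V} {u v : V}
    (p : G.Walk u v) (U : Set V) :
    Even (p.edges.countP (·.Crosses U)) ↔ (u ∈ U ↔ v ∈ U) := by
  induction p with
  | nil => simp
  | @cons a b _ _ p ih =>
    rw [Walk.edges_cons, List.countP_cons]
    by_cases h : s(a, b).Crosses U
    · simp only [h, decide_true, if_true, Nat.even_add_one, ih]
      rw [Sym2.crosses_mk_iff] at h
      tauto
    · simp only [h, decide_false, Bool.false_eq_true, if_false, add_zero, ih]
      rw [Sym2.crosses_mk_iff] at h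
      tauto

lemma SimpleGraph.Walk.exists_crosses_of_not_iff {G : SimpleGraph V} {u v : V}
    (p : G.Walk u v) {U : Set V} (huv : ¬(u ∈ U ↔ v ∈ U)) :
    ∃ e ∈ p.edges, e.Crosses U := by
  rw [← p.even_countP_crosses_iff] at huv
  obtain ⟨e, he, hU⟩ := List.countP_pos_iff.mp (Nat.pos_of_ne_zero fun h => huv (h ▸ Even.zero))
  exact ⟨e, he, of_decide_eq_true hU⟩

end Parity

section Cuts

variable {V : Type*} {G : SimpleGraph V}

lemma SimpleGraph.Walk.mem_sym2_of_mem_edges {u v : V} {p : G.Walk u v} {U : Set V}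
    (hp : ∀ t ∈ p.support, t ∈ U) {e : Sym2 V} (he : e ∈ p.edges) : e ∈ U.sym2 :=
  Set.mem_sym2_iff_subset.mpr fun _ ht => hp _ (p.mem_support_of_mem_edges he ht)

lemma SimpleGraph.ConnectedComponent.mem_supp_of_mem_support (c : G.ConnectedComponent)
    {u v : V} (p : G.Walk u v) (hu : u ∈ c.supp) : ∀ t ∈ p.support, t ∈ c.supp := by
  induction p with
  | nil => simpa using hu
  | cons hadj p ih =>
    simp only [Walk.support_cons, List.mem_cons, forall_eq_or_imp]
    exact ⟨hu, ih ((c.mem_supp_congr_adj hadj).mp hu)⟩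

def IsTrailConnectedIn (G : SimpleGraph V) (U : Set V) : Prop :=
  ∀ ⦃x⦄, x ∈ U → ∀ ⦃y⦄, y ∈ U → ∃ p : G.Walk x y, p.IsTrail ∧ ∀ t ∈ p.support, t ∈ U

lemma SimpleGraph.ConnectedComponent.isTrailConnectedIn_supp {H : SimpleGraph V} (hHG : H ≤ G)
    (c : H.ConnectedComponent) : IsTrailConnectedIn G c.supp := by
  classical
  intro x hx y hy
  let p := (c.reachable_of_mem_supp hx hy).some
  refine ⟨p.bypass.mapLe hHG, (Walk.isTrail_mapLe hHG).mpr p.bypass_isPath.isTrail, ?_⟩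
  rw [Walk.support_mapLe_eq_support]
  exact c.mem_supp_of_mem_support _ hx

lemma IsTrailConnectedIn.exists_crosses_mem_sym2 {U U' : Set V} (hU : IsTrailConnectedIn G U)
    {x z : V} (hx : x ∈ U) (hz : z ∈ U) (hxz : ¬(x ∈ U' ↔ z ∈ U')) :
    ∃ e ∈ G.edgeSet, e.Crosses U' ∧ e ∈ U.sym2 := by
  obtain ⟨p, -, hpU⟩ := hU hx hz
  obtain ⟨e, he, hU'⟩ := p.exists_crosses_of_not_iff hxz
  exact ⟨e, p.edges_subset_edgeSet he, hU', p.mem_sym2_of_mem_edges hpU he⟩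

/-- The two sides of a split displayed by deleting two edges of `G`. -/
structure IsTwoEdgeCut (G : SimpleGraph V) (U W : Set V) : Prop where
  disjoint : Disjoint U W
  left : IsTrailConnectedIn G U
  right : IsTrailConnectedIn G W
  crosses_left : ∃ e f : Sym2 V, ∀ g ∈ G.edgeSet, g.Crosses U → g = e ∨ g = f

lemma isTwoEdgeCut_supp {e f : Sym2 V} {c d : (G.deleteEdges {e, f}).ConnectedComponent}
    (hcd : c ≠ d) : IsTwoEdgeCut G c.supp d.supp where
  disjoint := pairwise_disjoint_supp_connectedComponent _ hcd
  left := c.isTrailConnectedIn_supp (deleteEdges_le _)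
  right := d.isTrailConnectedIn_supp (deleteEdges_le _)
  crosses_left := by
    refine ⟨e, f, fun g hg hgc => ?_⟩
    induction g using Sym2.ind with
    | _ a b =>
      by_contra hef
      have hadj : (G.deleteEdges {e, f}).Adj a b := by
        rw [deleteEdges_adj]
        exact ⟨hg, by simpa using hef⟩
      exact (Sym2.crosses_mk_iff.mp hgc) (c.mem_supp_congr_adj hadj)

lemma DisplaysSplit.exists_isTwoEdgeCut {A B : Set V} (h : DisplaysSplit G s(A, B)) :
    ∃ U W, A ⊆ U ∧ B ⊆ W ∧ IsTwoEdgeCut G U W := by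
  obtain ⟨A', B', hS, e, f, -, -, -, c, d, hcd, hA', hB'⟩ := h
  rcases Sym2.eq_iff.mp hS with ⟨rfl, rfl⟩ | ⟨rfl, rfl⟩
  · exact ⟨_, _, hA', hB', isTwoEdgeCut_supp hcd⟩
  · exact ⟨_, _, hB', hA', isTwoEdgeCut_supp hcd.symm⟩

end Cuts

section WeakCompatibility

variable {V : Type*} {G : SimpleGraph V}

lemma SimpleGraph.Walk.IsTrail.mem_inter_iff_iff_mem_sym2_iff {u v : V} {p : G.Walk u v}
    (hp : p.IsTrail) {U W U' W' : Set V} (hUW : Disjoint U W) (hUW' : Disjoint U' W')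
    {a b : Sym2 V} (ha : a ∈ p.edges) (hb : b ∈ p.edges) (haU : a.Crosses U)
    (hbU' : b.Crosses U') (hpU : ∀ e ∈ p.edges, e.Crosses U → e = a)
    (hpU' : ∀ e ∈ p.edges, e.Crosses U' → e = b) (ha' : a ∈ U'.sym2 ∨ a ∈ W'.sym2)
    (hb' : b ∈ U.sym2 ∨ b ∈ W.sym2) :
    (u ∈ U ∩ U' ↔ v ∈ U ∩ U') ↔ (a ∈ U'.sym2 ↔ b ∈ U.sym2) := by
  have hab : a ≠ b := fun h => Sym2.not_crosses_of_mem_sym2_or hUW (h ▸ hb') haU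
  have hbUU' := hbU'.crosses_inter_iff hUW hb'
  rw [Set.inter_comm] at hbUU'
  rw [← haU.crosses_inter_iff hUW' ha', ← hbUU', ← p.even_countP_crosses_iff,
    hp.edges_nodup.even_countP_iff_of_pair hab ha hb]
  exact fun e he heUU' => heUU'.of_inter.imp (hpU e he) (hpU' e he)

lemma IsTwoEdgeCut.exists_crossing_pair {U W : Set V} (h : IsTwoEdgeCut G U W) {x w y z : V}
    {p : G.Walk x w} {q : G.Walk y z} (hpq : ∀ e ∈ p.edges, e ∉ q.edges)
    (hxw : ¬(x ∈ U ↔ w ∈ U)) (hyz : ¬(y ∈ U ↔ z ∈ U)) :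
    ∃ a ∈ p.edges, ∃ b ∈ q.edges, a.Crosses U ∧ b.Crosses U ∧
      (∀ e ∈ p.edges, e.Crosses U → e = a) ∧ (∀ e ∈ q.edges, e.Crosses U → e = b) ∧
      ∀ g ∈ G.edgeSet, g.Crosses U → g = a ∨ g = b := by
  obtain ⟨e, f, hef⟩ := h.crosses_left
  obtain ⟨a, ha, haU⟩ := p.exists_crosses_of_not_iff hxw
  obtain ⟨b, hb, hbU⟩ := q.exists_crosses_of_not_iff hyz
  have hab : ∀ g ∈ G.edgeSet, g.Crosses U → g = a ∨ g = b := by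
    intro g hg hgU
    have hne : a ≠ b := fun hab => hpq a ha (hab ▸ hb)
    rcases hef g hg hgU with rfl | rfl <;>
    rcases hef a (p.edges_subset_edgeSet ha) haU with rfl | rfl <;>
    rcases hef b (q.edges_subset_edgeSet hb) hbU with rfl | rfl <;> tauto
  refine ⟨a, ha, b, hb, haU, hbU, fun g hg hgU => ?_, fun g hg hgU => ?_, hab⟩
  · exact (hab g (p.edges_subset_edgeSet hg) hgU).resolve_right fun hgb => hpq g hg (hgb ▸ hb)
  · exact (hab g (q.edges_subset_edgeSet hg) hgU).resolve_left fun hga => hpq g (hga ▸ ha) hg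

lemma IsTwoEdgeCut.mem_sym2_or {U W U' : Set V} (h : IsTwoEdgeCut G U W) {a b : Sym2 V}
    (hab : ∀ g ∈ G.edgeSet, g.Crosses U' → g = a ∨ g = b) {x z y w : V} (hx : x ∈ U)
    (hz : z ∈ U) (hxz : ¬(x ∈ U' ↔ z ∈ U')) (hy : y ∈ W) (hw : w ∈ W)
    (hyw : ¬(y ∈ U' ↔ w ∈ U')) :
    (a ∈ U.sym2 ∧ b ∈ W.sym2) ∨ (b ∈ U.sym2 ∧ a ∈ W.sym2) := by
  obtain ⟨e, he, heU', heU⟩ := h.left.exists_crosses_mem_sym2 hx hz hxz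
  obtain ⟨f, hf, hfU', hfW⟩ := h.right.exists_crosses_mem_sym2 hy hw hyw
  have hef : e ≠ f := by
    rintro rfl
    exact Set.disjoint_left.mp h.disjoint.sym2 heU hfW
  rcases hab e he heU' with rfl | rfl <;> rcases hab f hf hfU' with rfl | rfl <;> tauto

theorem IsTwoEdgeCut.inter_eq_empty_or {U₁ W₁ U₂ W₂ U₃ W₃ : Set V}
    (h₁ : IsTwoEdgeCut G U₁ W₁) (h₂ : IsTwoEdgeCut G U₂ W₂) (h₃ : IsTwoEdgeCut G U₃ W₃) :
    U₁ ∩ U₂ ∩ U₃ = ∅ ∨ W₁ ∩ W₂ ∩ U₃ = ∅ ∨ W₁ ∩ U₂ ∩ W₃ = ∅ ∨ U₁ ∩ W₂ ∩ W₃ = ∅ := by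
  simp only [← Set.not_nonempty_iff_eq_empty]
  by_contra! ⟨⟨x, ⟨hx₁, hx₂⟩, hx₃⟩, ⟨y, ⟨hy₁, hy₂⟩, hy₃⟩, ⟨z, ⟨hz₁, hz₂⟩, hz₃⟩,
    ⟨w, ⟨hw₁, hw₂⟩, hw₃⟩⟩
  have hy₂' := h₂.disjoint.notMem_of_mem_right hy₂
  have hw₂' := h₂.disjoint.notMem_of_mem_right hw₂
  have hz₃' := h₃.disjoint.notMem_of_mem_right hz₃
  have hw₃' := h₃.disjoint.notMem_of_mem_right hw₃
  obtain ⟨p, hp, hpU₁⟩ := h₁.left hx₁ hw₁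
  obtain ⟨q, hq, hqW₁⟩ := h₁.right hy₁ hz₁
  have hpq : ∀ e ∈ p.edges, e ∉ q.edges := fun e hep heq =>
    Set.disjoint_left.mp h₁.disjoint.sym2 (p.mem_sym2_of_mem_edges hpU₁ hep)
      (q.mem_sym2_of_mem_edges hqW₁ heq)
  obtain ⟨a₂, ha₂p, b₂, hb₂q, ha₂, hb₂, hpU₂, hqU₂, hU₂⟩ :=
    h₂.exists_crossing_pair hpq (by simp [hx₂, hw₂']) (by simp [hy₂', hz₂])
  obtain ⟨a₃, ha₃p, b₃, hb₃q, ha₃, hb₃, hpU₃, hqU₃, hU₃⟩ :=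
    h₃.exists_crossing_pair hpq (by simp [hx₃, hw₃']) (by simp [hy₃, hz₃'])
  have h₂₃ := h₂.mem_sym2_or hU₃ hx₂ hz₂ (by simp [hx₃, hz₃']) hy₂ hw₂ (by simp [hy₃, hw₃'])
  have h₃₂ := h₃.mem_sym2_or hU₂ hx₃ hy₃ (by simp [hx₂, hy₂']) hz₃ hw₃ (by simp [hz₂, hw₂'])
  have ha₃' : a₃ ∈ U₂.sym2 ∨ a₃ ∈ W₂.sym2 := h₂₃.imp And.left And.right
  have hb₃' : b₃ ∈ U₂.sym2 ∨ b₃ ∈ W₂.sym2 := h₂₃.symm.imp And.left And.right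
  have ha₂' : a₂ ∈ U₃.sym2 ∨ a₂ ∈ W₃.sym2 := h₃₂.imp And.left And.right
  have hb₂' : b₂ ∈ U₃.sym2 ∨ b₂ ∈ W₃.sym2 := h₃₂.symm.imp And.left And.right
  -- crossings of `U₂ ∩ U₃`: an odd number along `p`, an even number along `q`
  have hpW : ¬(a₂ ∈ U₃.sym2 ↔ a₃ ∈ U₂.sym2) := by
    rw [← hp.mem_inter_iff_iff_mem_sym2_iff h₂.disjoint h₃.disjoint ha₂p ha₃p ha₂ ha₃ hpU₂ hpU₃
      ha₂' ha₃']
    exact fun h => hw₂' (h.mp ⟨hx₂, hx₃⟩).1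
  have hqW : b₂ ∈ U₃.sym2 ↔ b₃ ∈ U₂.sym2 := by
    rw [← hq.mem_inter_iff_iff_mem_sym2_iff h₂.disjoint h₃.disjoint hb₂q hb₃q hb₂ hb₃ hqU₂ hqU₃
      hb₂' hb₃']
    exact iff_of_false (fun h => hy₂' h.1) (fun h => hz₃' h.2)
  have hU₂W₂ := Set.disjoint_left.mp h₂.disjoint.sym2
  have hU₃W₃ := Set.disjoint_left.mp h₃.disjoint.sym2
  rcases h₂₃ with ⟨ha₃U, hb₃W⟩ | ⟨hb₃U, ha₃W⟩ <;> rcases h₃₂ with ⟨ha₂U, hb₂W⟩ | ⟨hb₂U, ha₂W⟩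
  · exact hpW (iff_of_true ha₂U ha₃U)
  · exact hU₂W₂ (hqW.mp hb₂U) hb₃W
  · exact hU₃W₃ (hqW.mpr hb₃U) hb₂W
  · exact hpW (iff_of_false (fun h => hU₃W₃ h ha₂W) (fun h => hU₂W₂ h ha₃W))

end WeakCompatibility

theorem statement4_general {X : Type*} (Sig : Set (Sym2 (Set X)))
    (hcirc : ∃ C : SimpleGraph X, IsXCycle C ∧ DisplaysColl C Sig) :
    WeaklyCompatible Sig := by
  obtain ⟨C, -, hC⟩ := hcirc
  rintro S₁ hS₁ S₂ hS₂ S₃ hS₃ A₁ B₁ A₂ B₂ A₃ B₃ rfl rfl rfl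
  obtain ⟨U₁, W₁, hA₁, hB₁, h₁⟩ := (hC _ hS₁).exists_isTwoEdgeCut
  obtain ⟨U₂, W₂, hA₂, hB₂, h₂⟩ := (hC _ hS₂).exists_isTwoEdgeCut
  obtain ⟨U₃, W₃, hA₃, hB₃, h₃⟩ := (hC _ hS₃).exists_isTwoEdgeCut
  refine (h₁.inter_eq_empty_or h₂ h₃).imp ?_ (Or.imp ?_ (Or.imp ?_ ?_)) <;>
    exact Set.subset_eq_empty (by gcongr)

/-- a circular collection of partial splits of `X` is weakly compatible. -/
theorem statement4 {X : Type*} [Fintype X] (Sig : Set (Sym2 (Set X)))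
    (hSig : ∀ S ∈ Sig, IsPartialSplit S)
    (hcirc : ∃ C : SimpleGraph X, IsXCycle C ∧ DisplaysColl C Sig) :
    WeaklyCompatible Sig :=
  statement4_general Sig hcirc
end

section
/- Suppose Σ, Σ' ∈ P(X) are irreducible collections of partial splits and C is an X-cycle. If Σ' is obtained from Σ by a single application of the Y-rule θ_Y, then Σ is displayed by C if and only if Σ' is displayed by C. -/
/-!
Common definitions: partial splits of a finite set `X`, modelled as unordered
pairs (`Sym2`) of nonempty disjoint subsets of `X`; the `M`-, `Y`- and `Z`-
closure rules; weak compatibility; `X`-cycles and display; split closure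
sequences and split closures.
-/

variable {X : Type*}

/-!
Label the cycle by `ZMod n`. Deleting two of its edges leaves two complementary arcs, so `A|B`
is displayed iff `A` and `B` lie on complementary arcs. Pick `x ∈ A₁ ∩ A₂ ∩ A₃`,
`y ∈ B₁ ∩ B₂ ∩ A₃`, `z ∈ B₁ ∩ A₂ ∩ B₃`, and let `Pᵢ ∌ x` be the arc carrying `Bᵢ`. Cutting the
cycle at `x` turns the `Pᵢ` into intervals; as `y ∈ P₂ \ P₃` and `z ∈ P₃ \ P₂` both lie in
`P₁`, every point of `P₂ ∩ P₃` lies between them, hence in `P₁`. So each split produced by the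
`Y`-rule is displayed by the same two edges as the split it comes from. Conversely, every split
of `Σ` is extended by a split of `Σ'`, and display passes to restrictions.
-/

theorem Set.OrdConnected.inter_subset_of_separated {α : Type*} [LinearOrder α]
    {I J K : Set α} (hI : I.OrdConnected) (hJ : J.OrdConnected) (hK : K.OrdConnected)
    {y z : α} (hyI : y ∈ I) (hzI : z ∈ I) (hyJ : y ∈ J) (hzJ : z ∉ J) (hyK : y ∉ K)
    (hzK : z ∈ K) : J ∩ K ⊆ I := by
  rintro t ⟨htJ, htK⟩
  refine hI.uIcc_subset hyI hzI (Set.mem_uIcc.2 ?_)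
  rcases le_total t y with hty | hyt <;> rcases le_total t z with htz | hzt
  · rcases le_total y z with hyz | hzy
    · exact absurd (hK.out htK hzK ⟨hty, hyz⟩) hyK
    · exact absurd (hJ.out htJ hyJ ⟨htz, hzy⟩) hzJ
  · exact Or.inr ⟨hzt, hty⟩
  · exact Or.inl ⟨hyt, htz⟩
  · rcases le_total y z with hyz | hzy
    · exact absurd (hJ.out hyJ htJ ⟨hyz, hzt⟩) hzJ
    · exact absurd (hK.out hzK htK ⟨hzy, hyt⟩) hyK

namespace ZMod

variable {n : ℕ}

theorem val_sub_of_lt [NeZero n] {a b : ZMod n} (h : a.val < b.val) :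
    (a - b).val = n + a.val - b.val := by
  have hba : b - a ≠ 0 := fun h0 => by rw [sub_eq_zero] at h0; subst h0; omega
  rw [← neg_sub, neg_val, if_neg hba, val_sub h.le]
  have := val_lt b
  omega

/-- The arc `a + 1, a + 2, …, c` of the cycle `ZMod n`. -/
def arc (a c : ZMod n) : Set (ZMod n) :=
  {u | (u - (a + 1)).val < (c - a).val}

variable {a c u w : ZMod n}

theorem mem_arc : u ∈ arc a c ↔ (u - (a + 1)).val < (c - a).val :=
  Iff.rfl

theorem mem_arc_swap [NeZero n] (hac : a ≠ c) : u ∈ arc c a ↔ u ∉ arc a c := by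
  have hd : c - a ≠ 0 := sub_ne_zero.2 hac.symm
  have hd' : (c - a).val ≠ 0 := by rwa [Ne, val_eq_zero]
  have e₁ : u - (c + 1) = (u - (a + 1)) - (c - a) := by ring
  have e₂ : a - c = -(c - a) := by ring
  rw [mem_arc, mem_arc, e₁, e₂, neg_val, if_neg hd]
  have := val_lt (u - (a + 1))
  rcases le_or_gt (c - a).val (u - (a + 1)).val with h | h
  · rw [val_sub h]; omega
  · rw [val_sub_of_lt h]; omega

theorem add_one_mem_arc_iff [Fact (1 < n)] (hua : u ≠ a) (huc : u ≠ c) :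
    u + 1 ∈ arc a c ↔ u ∈ arc a c := by
  have e₁ : u + 1 - (a + 1) = u - a := by ring
  have e₂ : u - (a + 1) = (u - a) - 1 := by ring
  have h₁ : (u - a).val ≠ 0 := by rwa [Ne, val_eq_zero, sub_eq_zero]
  have h₂ : (u - a).val ≠ (c - a).val := fun h => huc (by simpa using val_injective n h)
  rw [mem_arc, mem_arc, e₁, e₂, val_sub (a := u - a) (by rw [val_one]; omega), val_one]
  omega

theorem right_mem_arc [NeZero n] (hac : a ≠ c) : c ∈ arc a c := by
  have hn : n ≠ 1 := by
    rintro rfl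
    exact hac (Subsingleton.elim a c)
  have hd : (c - a).val ≠ 0 := by rwa [Ne, val_eq_zero, sub_eq_zero, eq_comm]
  have e : c - (a + 1) = (c - a) - 1 := by ring
  rw [mem_arc, e, val_sub (by rw [val_one'' hn]; omega), val_one'' hn]
  omega

theorem exists_arc_eq_preimage_Ico [NeZero n] (hw : w ∉ arc a c) :
    ∃ l r : ℕ, arc a c = (fun u => (u - w).val) ⁻¹' Set.Ico l r := by
  refine ⟨n - (w - (a + 1)).val, n - (w - (a + 1)).val + (c - a).val, ?_⟩
  ext u
  have e : u - w = (u - (a + 1)) - (w - (a + 1)) := by ring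
  rw [mem_arc] at hw ⊢
  simp only [Set.mem_preimage, Set.mem_Ico, e]
  have := val_lt (u - (a + 1))
  have := val_lt (w - (a + 1))
  rcases le_or_gt (w - (a + 1)).val (u - (a + 1)).val with h | h
  · rw [val_sub h]; omega
  · rw [val_sub_of_lt h]; omega


variable [NeZero n] {a₁ c₁ a₂ c₂ a₃ c₃ x y z : ZMod n}

theorem arc_inter_arc_subset (hx₁ : x ∉ arc a₁ c₁) (hx₂ : x ∉ arc a₂ c₂) (hx₃ : x ∉ arc a₃ c₃)
    (hy₁ : y ∈ arc a₁ c₁) (hy₂ : y ∈ arc a₂ c₂) (hy₃ : y ∉ arc a₃ c₃)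
    (hz₁ : z ∈ arc a₁ c₁) (hz₂ : z ∉ arc a₂ c₂) (hz₃ : z ∈ arc a₃ c₃) :
    arc a₂ c₂ ∩ arc a₃ c₃ ⊆ arc a₁ c₁ := by
  obtain ⟨l₁, r₁, h₁⟩ := exists_arc_eq_preimage_Ico hx₁
  obtain ⟨l₂, r₂, h₂⟩ := exists_arc_eq_preimage_Ico hx₂
  obtain ⟨l₃, r₃, h₃⟩ := exists_arc_eq_preimage_Ico hx₃
  rw [h₁] at hy₁ hz₁ ⊢
  rw [h₂] at hy₂ hz₂ ⊢
  rw [h₃] at hy₃ hz₃ ⊢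
  rw [← Set.preimage_inter]
  exact Set.preimage_mono (Set.ordConnected_Ico.inter_subset_of_separated Set.ordConnected_Ico
    Set.ordConnected_Ico hy₁ hz₁ hy₂ hz₂ hy₃ hz₃)

end ZMod

noncomputable def splitSize (S : Sym2 (Set X)) : ℕ :=
  Sym2.lift ⟨fun A B => A.ncard + B.ncard, fun _ _ => Nat.add_comm _ _⟩ S

theorem splitExtends_refl (S : Sym2 (Set X)) : SplitExtends S S := by
  induction S using Sym2.ind with
  | _ A B => exact ⟨A, B, A, B, rfl, rfl, subset_rfl, subset_rfl⟩

theorem SplitExtends.trans {S T U : Sym2 (Set X)} (hST : SplitExtends S T)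
    (hTU : SplitExtends T U) : SplitExtends S U := by
  obtain ⟨A, B, C, D, rfl, rfl, hCA, hDB⟩ := hST
  obtain ⟨C', D', E, F, hT, rfl, hEC, hFD⟩ := hTU
  rcases Sym2.eq_iff.1 hT with ⟨rfl, rfl⟩ | ⟨rfl, rfl⟩
  · exact ⟨A, B, E, F, rfl, rfl, hEC.trans hCA, hFD.trans hDB⟩
  · exact ⟨A, B, F, E, rfl, Sym2.eq_swap, hFD.trans hCA, hEC.trans hDB⟩

theorem SplitExtends.splitSize_lt [Finite X] {S T : Sym2 (Set X)} (h : SplitExtends T S)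
    (hne : T ≠ S) : splitSize S < splitSize T := by
  obtain ⟨A, B, C, D, rfl, rfl, hCA, hDB⟩ := h
  have hC := Set.ncard_le_ncard hCA
  have hD := Set.ncard_le_ncard hDB
  by_contra hle
  apply hne
  rw [Set.eq_of_subset_of_ncard_le hCA (by simp only [splitSize, Sym2.lift_mk] at hle; omega),
    Set.eq_of_subset_of_ncard_le hDB (by simp only [splitSize, Sym2.lift_mk] at hle; omega)]

theorem exists_mem_sreduce_splitExtends [Finite X] {Sig : Set (Sym2 (Set X))}
    {S : Sym2 (Set X)} (hS : S ∈ Sig) : ∃ T ∈ sreduce Sig, SplitExtends T S := by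
  obtain ⟨T, ⟨hT, hTS⟩, hmax⟩ := (Set.toFinite {T | T ∈ Sig ∧ SplitExtends T S}).exists_maximalFor
    splitSize _ ⟨S, hS, splitExtends_refl S⟩
  refine ⟨T, ⟨hT, fun ⟨U, hU, hUT, hUext⟩ => ?_⟩, hTS⟩
  have hlt := hUext.splitSize_lt hUT
  have := hmax ⟨hU, hUext.trans hTS⟩ hlt.le
  omega

theorem DisplaysSplit.of_splitExtends {C : SimpleGraph X} {S T : Sym2 (Set X)}
    (hT : DisplaysSplit C T) (h : SplitExtends T S) : DisplaysSplit C S := by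
  obtain ⟨A, B, C', D, rfl, rfl, hCA, hDB⟩ := h
  obtain ⟨A', B', hT, e₁, e₂, he₁, he₂, hne, K₁, K₂, hK, hA, hB⟩ := hT
  rcases Sym2.eq_iff.1 hT with ⟨rfl, rfl⟩ | ⟨rfl, rfl⟩
  · exact ⟨C', D, rfl, e₁, e₂, he₁, he₂, hne, K₁, K₂, hK, hCA.trans hA, hDB.trans hB⟩
  · exact ⟨C', D, rfl, e₁, e₂, he₁, he₂, hne, K₂, K₁, hK.symm, hCA.trans hB, hDB.trans hA⟩

open ZMod

section CycleLabeling

variable {n : ℕ} {C : SimpleGraph X} {F : ZMod n ≃ X}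

def IsCycleLabeling (C : SimpleGraph X) (F : ZMod n ≃ X) : Prop :=
  ∀ i j, C.Adj (F i) (F j) ↔ j = i + 1 ∨ i = j + 1

theorem SimpleGraph.Walk.IsCycle.getVert_val_add_one {v : X} {p : C.Walk v v} (hp : p.IsCycle)
    [NeZero p.length] (i : ZMod p.length) : p.getVert (i + 1).val = p.getVert (i.val + 1) := by
  have : Fact (1 < p.length) := ⟨by have := hp.three_le_length; omega⟩
  rw [ZMod.val_add, ZMod.val_one]
  rcases Nat.lt_or_ge (i.val + 1) p.length with h | h
  · rw [Nat.mod_eq_of_lt h]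
  · rw [le_antisymm (ZMod.val_lt i) h, Nat.mod_self, p.getVert_zero, p.getVert_length]

theorem SimpleGraph.Walk.IsCycle.exists_cycleLabeling [Finite X] {v : X} {p : C.Walk v v}
    (hp : p.IsCycle) (hC : C.IsCycles) (hspan : ∀ w, w ∈ p.support) :
    ∃ F : ZMod p.length ≃ X, IsCycleLabeling C F := by
  classical
  have := Fintype.ofFinite X
  have : NeZero p.length := ⟨by have := hp.three_le_length; omega⟩
  let F : ZMod p.length → X := fun i => p.getVert i.val
  have hinj : Function.Injective F := fun i j h =>
    ZMod.val_injective _ (hp.getVert_injOn' (by have := ZMod.val_lt i; simp; omega)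
      (by have := ZMod.val_lt j; simp; omega) h)
  have hsurj : Function.Surjective F := by
    intro w
    obtain ⟨k, rfl, hk⟩ := p.mem_support_iff_exists_getVert.1 (hspan w)
    rcases hk.lt_or_eq with hk | rfl
    · exact ⟨k, by simp [F, ZMod.val_cast_of_lt hk]⟩
    · exact ⟨0, by simp [F]⟩
  refine ⟨Equiv.ofBijective F ⟨hinj, hsurj⟩, fun i j => ?_⟩
  change C.Adj (F i) (F j) ↔ _
  rw [← hp.adj_toSubgraph_iff_of_isCycles hC (p.mem_verts_toSubgraph.2 (hspan _)),
    p.toSubgraph_adj_iff]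
  constructor
  · rintro ⟨k, hk, hkn⟩
    have hk' : s(F k, F (k + 1)) = s(F i, F j) := by
      simpa only [F, hp.getVert_val_add_one, ZMod.val_cast_of_lt hkn] using hk
    rcases Sym2.eq_iff.1 hk' with ⟨h₁, h₂⟩ | ⟨h₁, h₂⟩
    · left; rw [← hinj h₁, hinj h₂]
    · right; rw [← hinj h₁, hinj h₂]
  · rintro (rfl | rfl)
    · exact ⟨i.val, by simp only [F, hp.getVert_val_add_one], ZMod.val_lt i⟩
    · exact ⟨j.val, by rw [Sym2.eq_swap]; simp only [F, hp.getVert_val_add_one], ZMod.val_lt j⟩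

theorem IsXCycle.exists_cycleLabeling [Finite X] (hC : IsXCycle C) :
    ∃ n, 3 ≤ n ∧ ∃ F : ZMod n ≃ X, IsCycleLabeling C F := by
  obtain ⟨hconn, -, hdeg⟩ := hC
  have hcyc : C.IsCycles := fun v _ => hdeg v
  obtain ⟨v⟩ := hconn.nonempty
  obtain ⟨p, hp, hverts⟩ := hcyc.exists_cycle_toSubgraph_verts_eq_connectedComponentSupp
    (c := C.connectedComponentMk v) rfl
    (Set.nonempty_of_ncard_ne_zero (by rw [hdeg]; norm_num))
  have hspan : ∀ w, w ∈ p.support := fun w => by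
    rw [← p.mem_verts_toSubgraph, hverts, SimpleGraph.ConnectedComponent.mem_supp_iff,
      SimpleGraph.ConnectedComponent.eq]
    exact hconn.preconnected w v
  exact ⟨p.length, hp.three_le_length, hp.exists_cycleLabeling hcyc hspan⟩

theorem edge_eq_edge_iff {f : ZMod n → X} (hf : Function.Injective f) (hn : 3 ≤ n)
    {a c : ZMod n} : s(f a, f (a + 1)) = s(f c, f (c + 1)) ↔ a = c := by
  refine ⟨fun h => ?_, fun h => h ▸ rfl⟩
  rcases Sym2.eq_iff.1 h with ⟨h₁, -⟩ | ⟨h₁, h₂⟩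
  · exact hf h₁
  · have h₂' : ((2 : ℕ) : ZMod n) = 0 := by
      push_cast
      linear_combination hf h₂ - hf h₁
    rw [ZMod.natCast_eq_zero_iff] at h₂'
    exact absurd (Nat.le_of_dvd two_pos h₂') (by omega)

theorem IsCycleLabeling.exists_eq_of_mem_edgeSet (hF : IsCycleLabeling C F) {e : Sym2 X}
    (he : e ∈ C.edgeSet) : ∃ a, e = s(F a, F (a + 1)) := by
  induction e using Sym2.ind with
  | _ x y =>
    obtain ⟨i, rfl⟩ := F.surjective x
    obtain ⟨j, rfl⟩ := F.surjective y
    rcases (hF i j).1 he with rfl | rfl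
    · exact ⟨i, rfl⟩
    · exact ⟨j, Sym2.eq_swap⟩

-- Reducible, so that it unfolds to the graph in `DisplaysSplit`.
abbrev cycleCut (C : SimpleGraph X) (F : ZMod n ≃ X) (a c : ZMod n) : SimpleGraph X :=
  C.deleteEdges {s(F a, F (a + 1)), s(F c, F (c + 1))}

theorem cycleCut_comm (a c : ZMod n) : cycleCut C F a c = cycleCut C F c a := by
  rw [cycleCut, cycleCut, Set.pair_comm]

variable {a c u v w : ZMod n}

theorem IsCycleLabeling.cycleCut_adj_add_one (hF : IsCycleLabeling C F) (hn : 3 ≤ n) :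
    (cycleCut C F a c).Adj (F u) (F (u + 1)) ↔ u ≠ a ∧ u ≠ c := by
  simp only [cycleCut, SimpleGraph.deleteEdges_adj, Set.mem_insert_iff, Set.mem_singleton_iff,
    edge_eq_edge_iff F.injective hn, not_or, and_iff_right ((hF u (u + 1)).2 (Or.inl rfl))]

theorem IsCycleLabeling.mem_arc_iff_of_cycleCut_adj [NeZero n] (hF : IsCycleLabeling C F)
    (hn : 3 ≤ n) (h : (cycleCut C F a c).Adj (F u) (F v)) : u ∈ arc a c ↔ v ∈ arc a c := by
  have : Fact (1 < n) := ⟨by omega⟩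
  rcases (hF u v).1 h.1 with rfl | rfl
  · obtain ⟨hua, huc⟩ := (hF.cycleCut_adj_add_one hn).1 h
    exact (add_one_mem_arc_iff hua huc).symm
  · obtain ⟨hva, hvc⟩ := (hF.cycleCut_adj_add_one hn).1 h.symm
    exact add_one_mem_arc_iff hva hvc

theorem IsCycleLabeling.reachable_cycleCut_of_mem_arc [NeZero n] (hF : IsCycleLabeling C F)
    (hn : 3 ≤ n) (hu : u ∈ arc a c) : (cycleCut C F a c).Reachable (F (a + 1)) (F u) := by
  suffices h : ∀ k : ℕ, k < (c - a).val →
      (cycleCut C F a c).Reachable (F (a + 1)) (F (a + 1 + k)) by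
    simpa using h _ hu
  have hlt := ZMod.val_lt (c - a)
  intro k hk
  induction k with
  | zero => simp
  | succ k ih =>
    refine (ih (by omega)).trans (SimpleGraph.Adj.reachable ?_)
    rw [Nat.cast_succ, ← add_assoc]
    have hkn : k + 1 < n := by omega
    refine (hF.cycleCut_adj_add_one hn).2 ⟨fun h => ?_, fun h => ?_⟩
    · have h' : ((k + 1 : ℕ) : ZMod n) = 0 := by
        push_cast
        linear_combination h
      rw [ZMod.natCast_eq_zero_iff] at h'
      exact absurd (Nat.le_of_dvd (by omega) h') (by omega)
    · have h' : c - a = ((k + 1 : ℕ) : ZMod n) := by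
        push_cast
        linear_combination -h
      rw [h', ZMod.val_cast_of_lt hkn] at hk
      omega

theorem IsCycleLabeling.reachable_cycleCut_iff [NeZero n] (hF : IsCycleLabeling C F)
    (hn : 3 ≤ n) (hac : a ≠ c) :
    (cycleCut C F a c).Reachable (F u) (F v) ↔ (u ∈ arc a c ↔ v ∈ arc a c) := by
  constructor
  · intro h
    suffices key : ∀ x y, (cycleCut C F a c).Reachable x y →
        (F.symm x ∈ arc a c ↔ F.symm y ∈ arc a c) by
      simpa using key _ _ h
    intro x y hxy
    rw [SimpleGraph.reachable_iff_reflTransGen] at hxy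
    induction hxy with
    | refl => rfl
    | tail _ hyz ih =>
      exact ih.trans (hF.mem_arc_iff_of_cycleCut_adj hn (by simpa using hyz))
  · intro h
    by_cases hu : u ∈ arc a c
    · exact (hF.reachable_cycleCut_of_mem_arc hn hu).symm.trans
        (hF.reachable_cycleCut_of_mem_arc hn (h.1 hu))
    · have hv : v ∉ arc a c := fun hv => hu (h.2 hv)
      rw [← mem_arc_swap hac] at hu hv
      rw [cycleCut_comm]
      exact (hF.reachable_cycleCut_of_mem_arc hn hu).symm.trans
        (hF.reachable_cycleCut_of_mem_arc hn hv)

theorem IsCycleLabeling.preimage_supp_cycleCut [NeZero n] (hF : IsCycleLabeling C F)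
    (hn : 3 ≤ n) (hac : a ≠ c) (hw : w ∈ arc a c) :
    F ⁻¹' ((cycleCut C F a c).connectedComponentMk (F w)).supp = arc a c := by
  ext u
  simp [SimpleGraph.ConnectedComponent.mem_supp_iff, hF.reachable_cycleCut_iff hn hac, hw]

theorem IsCycleLabeling.preimage_supp_cycleCut_eq_or [NeZero n] (hF : IsCycleLabeling C F)
    (hn : 3 ≤ n) (hac : a ≠ c) (K : (cycleCut C F a c).ConnectedComponent) :
    F ⁻¹' K.supp = arc a c ∨ F ⁻¹' K.supp = arc c a := by
  induction K using SimpleGraph.ConnectedComponent.ind with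
  | h x =>
    obtain ⟨w, rfl⟩ := F.surjective x
    by_cases hw : w ∈ arc a c
    · exact Or.inl (hF.preimage_supp_cycleCut hn hac hw)
    · right
      rw [cycleCut_comm]
      exact hF.preimage_supp_cycleCut hn hac.symm ((mem_arc_swap hac).2 hw)

end CycleLabeling

section Display

variable {n : ℕ} [NeZero n] {C : SimpleGraph X} {F : ZMod n ≃ X}

theorem IsCycleLabeling.exists_arcs_of_ne (hF : IsCycleLabeling C F) (hn : 3 ≤ n) {a c : ZMod n}
    (hac : a ≠ c) {K₁ K₂ : (cycleCut C F a c).ConnectedComponent} (hK : K₁ ≠ K₂) :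
    ∃ a' c', a' ≠ c' ∧ F ⁻¹' K₁.supp = arc c' a' ∧ F ⁻¹' K₂.supp = arc a' c' := by
  have hK' : F ⁻¹' K₁.supp ≠ F ⁻¹' K₂.supp := fun h =>
    hK (SimpleGraph.ConnectedComponent.supp_inj.1 (F.surjective.preimage_injective h))
  rcases hF.preimage_supp_cycleCut_eq_or hn hac K₁ with h₁ | h₁ <;>
    rcases hF.preimage_supp_cycleCut_eq_or hn hac K₂ with h₂ | h₂
  · exact absurd (h₁.trans h₂.symm) hK'
  · exact ⟨c, a, hac.symm, h₁, h₂⟩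
  · exact ⟨a, c, hac, h₁, h₂⟩
  · exact absurd (h₁.trans h₂.symm) hK'

theorem IsCycleLabeling.displaysSplit_iff (hF : IsCycleLabeling C F) (hn : 3 ≤ n)
    {A B : Set X} :
    DisplaysSplit C s(A, B) ↔ ∃ a c, a ≠ c ∧ F ⁻¹' A ⊆ arc c a ∧ F ⁻¹' B ⊆ arc a c := by
  constructor
  · rintro ⟨A', B', hAB, e₁, e₂, he₁, he₂, hne, K₁, K₂, hK, hA', hB'⟩
    obtain ⟨a, rfl⟩ := hF.exists_eq_of_mem_edgeSet he₁
    obtain ⟨c, rfl⟩ := hF.exists_eq_of_mem_edgeSet he₂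
    have hac : a ≠ c := fun h => hne (h ▸ rfl)
    have hsep : ∃ a c, a ≠ c ∧ F ⁻¹' A' ⊆ arc c a ∧ F ⁻¹' B' ⊆ arc a c := by
      obtain ⟨a', c', hac', h₁, h₂⟩ := hF.exists_arcs_of_ne hn hac hK
      exact ⟨a', c', hac', h₁ ▸ Set.preimage_mono hA', h₂ ▸ Set.preimage_mono hB'⟩
    rcases Sym2.eq_iff.1 hAB with ⟨rfl, rfl⟩ | ⟨rfl, rfl⟩
    · exact hsep
    · obtain ⟨a, c, hac, hA, hB⟩ := hsep
      exact ⟨c, a, hac.symm, hB, hA⟩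
  · rintro ⟨a, c, hac, hA, hB⟩
    have ha : F ⁻¹' ((cycleCut C F a c).connectedComponentMk (F a)).supp = arc c a := by
      rw [cycleCut_comm]
      exact hF.preimage_supp_cycleCut hn hac.symm (right_mem_arc hac.symm)
    have hc : F ⁻¹' ((cycleCut C F a c).connectedComponentMk (F c)).supp = arc a c :=
      hF.preimage_supp_cycleCut hn hac (right_mem_arc hac)
    refine ⟨A, B, rfl, s(F a, F (a + 1)), s(F c, F (c + 1)), (hF a (a + 1)).2 (Or.inl rfl),
      (hF c (c + 1)).2 (Or.inl rfl), fun h => hac ((edge_eq_edge_iff F.injective hn).1 h),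
      (cycleCut C F a c).connectedComponentMk (F a),
      (cycleCut C F a c).connectedComponentMk (F c), fun h => ?_,
      by rwa [← F.preimage_subset, ha], by rwa [← F.preimage_subset, hc]⟩
    have hcc : c ∈ arc c a := by rw [← ha, h, hc]; exact right_mem_arc hac
    exact (mem_arc_swap hac).1 hcc (right_mem_arc hac)

theorem IsCycleLabeling.displaysSplit_yOut (hF : IsCycleLabeling C F) (hn : 3 ≤ n)
    {A₁ B₁ A₂ B₂ A₃ B₃ : Set X} (h₁ : DisplaysSplit C s(A₁, B₁))
    (h₂ : DisplaysSplit C s(A₂, B₂)) (h₃ : DisplaysSplit C s(A₃, B₃))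
    (hx : (A₁ ∩ A₂ ∩ A₃).Nonempty) (hy : (B₁ ∩ B₂ ∩ A₃).Nonempty)
    (hz : (B₁ ∩ A₂ ∩ B₃).Nonempty) :
    DisplaysSplit C s(B₁ ∪ B₂ ∩ B₃, A₁) ∧ DisplaysSplit C s(A₂ ∪ A₁ ∩ B₃, B₂) := by
  obtain ⟨x, ⟨hx₁, hx₂⟩, hx₃⟩ := hx
  obtain ⟨y, ⟨hy₁, hy₂⟩, hy₃⟩ := hy
  obtain ⟨z, ⟨hz₁, hz₂⟩, hz₃⟩ := hz
  rw [Sym2.eq_swap, hF.displaysSplit_iff hn, hF.displaysSplit_iff hn]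
  rw [hF.displaysSplit_iff hn] at h₁ h₂ h₃
  obtain ⟨a₁, c₁, hac₁, hA₁, hB₁⟩ := h₁
  obtain ⟨a₂, c₂, hac₂, hA₂, hB₂⟩ := h₂
  obtain ⟨a₃, c₃, hac₃, hA₃, hB₃⟩ := h₃
  have hA₁' : ∀ u, F u ∈ A₁ → u ∉ arc a₁ c₁ := fun u hu => (mem_arc_swap hac₁).1 (hA₁ hu)
  have hA₂' : ∀ u, F u ∈ A₂ → u ∉ arc a₂ c₂ := fun u hu => (mem_arc_swap hac₂).1 (hA₂ hu)
  have hA₃' : ∀ u, F u ∈ A₃ → u ∉ arc a₃ c₃ := fun u hu => (mem_arc_swap hac₃).1 (hA₃ hu)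
  have key : arc a₂ c₂ ∩ arc a₃ c₃ ⊆ arc a₁ c₁ :=
    arc_inter_arc_subset (x := F.symm x) (y := F.symm y) (z := F.symm z)
      (hA₁' _ (by simpa)) (hA₂' _ (by simpa)) (hA₃' _ (by simpa))
      (hB₁ (by simpa)) (hB₂ (by simpa)) (hA₃' _ (by simpa))
      (hB₁ (by simpa)) (hA₂' _ (by simpa)) (hB₃ (by simpa))
  refine ⟨⟨a₁, c₁, hac₁, hA₁, ?_⟩, ⟨a₂, c₂, hac₂, ?_, hB₂⟩⟩
  · rintro u (hu | ⟨hu₂, hu₃⟩)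
    · exact hB₁ hu
    · exact key ⟨hB₂ hu₂, hB₃ hu₃⟩
  · rintro u (hu | ⟨hu₁, hu₃⟩)
    · exact hA₂ hu
    · exact (mem_arc_swap hac₂).2 fun hu₂ => hA₁' u hu₁ (key ⟨hu₂, hB₃ hu₃⟩)

end Display

theorem IsXCycle.displaysColl_yOut [Finite X] {C : SimpleGraph X} (hC : IsXCycle C)
    {A₁ B₁ A₂ B₂ A₃ B₃ : Set X} (h₁ : DisplaysSplit C s(A₁, B₁))
    (h₂ : DisplaysSplit C s(A₂, B₂)) (h₃ : DisplaysSplit C s(A₃, B₃))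
    (hx : (A₁ ∩ A₂ ∩ A₃).Nonempty) (hy : (B₁ ∩ B₂ ∩ A₃).Nonempty)
    (hz : (B₁ ∩ A₂ ∩ B₃).Nonempty) : DisplaysColl C (yOut A₁ B₁ A₂ B₂ A₃ B₃) := by
  obtain ⟨n, hn, F, hF⟩ := hC.exists_cycleLabeling
  have : NeZero n := ⟨by omega⟩
  obtain ⟨h₁', h₂'⟩ := hF.displaysSplit_yOut hn h₁ h₂ h₃ hx hy hz
  obtain ⟨-, h₃'⟩ := hF.displaysSplit_yOut hn h₁ h₃ h₂ (by rwa [Set.inter_right_comm])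
    (by rwa [Set.inter_right_comm]) (by rwa [Set.inter_right_comm])
  rintro S (rfl | rfl | rfl)
  exacts [h₁', h₂', h₃']

theorem statement6_general {X : Type*} [Fintype X] (Sig Sig' : Set (Sym2 (Set X))) (C : SimpleGraph X)
    (hC : IsXCycle C) (hstep : yStep Sig Sig') :
    DisplaysColl C Sig ↔ DisplaysColl C Sig' := by
  obtain ⟨A₁, B₁, A₂, B₂, A₃, B₃, h₁, h₂, h₃, -, -, -, ⟨hx, hy, hz, -⟩, rfl⟩ := hstep
  constructor
  · rintro hd S ⟨hS | hS, -⟩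
    · exact hd S hS
    · exact hC.displaysColl_yOut (hd _ h₁) (hd _ h₂) (hd _ h₃) hx hy hz S hS
  · intro hd S hS
    obtain ⟨T, hT, hTS⟩ := exists_mem_sreduce_splitExtends (Set.mem_union_left _ hS)
    exact (hd T hT).of_splitExtends hTS

/-- if `Σ, Σ' ∈ P(X)`, `C` is an `X`-cycle and `Σ'` is obtained from `Σ` by a
single application of the `Y`-rule, then `Σ` is displayed by `C` iff `Σ'` is displayed by `C`. -/
theorem statement6 {X : Type*} [Fintype X] (Sig Sig' : Set (Sym2 (Set X))) (C : SimpleGraph X)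
    (hSig : InPX Sig) (hSig' : InPX Sig') (hC : IsXCycle C)
    (hstep : yStep Sig Sig') :
    DisplaysColl C Sig ↔ DisplaysColl C Sig' :=
  statement6_general Sig Sig' C hC hstep
end
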